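/- Let √5 denote the positive real square root of 5, let k be a natural number, and let v₀, v₁, …, v_n be a finite sequence of real numbers such that v₀ = −(−√5)^k, v_n = 1, and for each i < n the number v_{i+1} belongs to the set {v_i, −v_i, −√5·v_i, −v_i/√5}. Then n > k. -/
import Mathlib


/-- Let `√5` be the positive real square root of `5`, `k` a natural number, and
`v 0, v 1, …, v n` a finite sequence of real numbers with `v 0 = −(−√5)^k`,
`v n = 1`, and for each `i < n` the number `v (i+1)` belongs to
`{v i, −v i, −√5·v i, −v i/√5}`. Then `n > k`. -/
theorem stmt_8 (k n : ℕ) (v : ℕ → ℝ)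
    (h0 : v 0 = -(-Real.sqrt 5) ^ k) (hn : v n = 1)
    (hstep : ∀ i < n, v (i + 1) ∈
      ({v i, -v i, -Real.sqrt 5 * v i, -v i / Real.sqrt 5} : Set ℝ)) :
    n > k := by
  set s := Real.sqrt 5 with hs
  have hspos : (0:ℝ) < s := Real.sqrt_pos.mpr (by norm_num)
  have hs1 : (1:ℝ) < s := by
    rw [hs, show (1:ℝ) = Real.sqrt 1 by simp]
    exact Real.sqrt_lt_sqrt (by norm_num) (by norm_num)
  have key : ∀ i ≤ n, ∃ (m : ℤ) (ε : ℝ), (ε = 1 ∨ ε = -1) ∧ v i = ε * s ^ m ∧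
      (k : ℤ) - m ≤ i ∧ ((k : ℤ) - m = i → ε = (-1) ^ (k + 1 + i)) := by
    intro i hi
    induction i with
    | zero =>
      refine ⟨k, (-1) ^ (k+1), ?_, ?_, by simp, by simp⟩
      · rcases Nat.even_or_odd (k+1) with h | h
        · exact Or.inl (h.neg_one_pow)
        · exact Or.inr (h.neg_one_pow)
      · rw [h0, neg_pow, pow_succ, zpow_natCast]
        ring
    | succ i ih =>
      obtain ⟨m, ε, hε, hv, hle, heq⟩ := ih (by omega)
      rcases hstep i (by omega) with h | h | h | h
      · exact ⟨m, ε, hε, by rw [h, hv], by omega,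
          fun hc => absurd hc (by omega)⟩
      · refine ⟨m, -ε, by rcases hε with h'|h' <;> simp [h'], by simp [h, hv], by omega,
          fun hc => absurd hc (by omega)⟩
      · refine ⟨m + 1, -ε, by rcases hε with h'|h' <;> simp [h'], ?_, by omega,
          fun hc => absurd hc (by omega)⟩
        rw [h, hv, zpow_add_one₀ (ne_of_gt hspos)]; ring
      · refine ⟨m - 1, -ε, by rcases hε with h'|h' <;> simp [h'], ?_, by omega, ?_⟩
        · rw [h, hv, zpow_sub_one₀ (ne_of_gt hspos)]; field_simp
        · intro hc
          have : (k:ℤ) - m = i := by push_cast at hc ⊢; omega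
          rw [heq this, show k + 1 + (i+1) = (k+1+i) + 1 from rfl, pow_succ]
          ring
  obtain ⟨m, ε, hε, hv, hle, heq⟩ := key n le_rfl
  have hε1 : ε = 1 := by
    rcases hε with h' | h'
    · exact h'
    · exfalso
      have := zpow_pos hspos m
      rw [hn, h'] at hv; nlinarith
  have hm0 : m = 0 := by
    have : s ^ m = s ^ (0:ℤ) := by
      rw [hε1] at hv; rw [zpow_zero]; linarith [hv]
    exact zpow_right_injective₀ hspos hs1.ne' this
  have hkn : (k:ℤ) ≤ n := by omega
  rcases lt_or_eq_of_le hkn with h | h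
  · exact_mod_cast h
  · exfalso
    have hc : (k:ℤ) - m = n := by omega
    have := heq hc
    rw [hε1] at this
    have hkk : k + 1 + n = 2*k + 1 := by omega
    rw [hkk] at this
    rw [Odd.neg_one_pow ⟨k, by ring⟩] at this
    norm_num at this
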